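/- There exists a constant K > 0 such that for all n ∈ ℕ, sup_{x ∈ [0,1]} ψ_n(x) − ψ_n(1/3) ≤ K; in fact one may take K = π + log(4/3). -/

import Mathlib

noncomputable def psi (x : ℝ) : ℝ := Real.log (1 - Real.cos (2 * Real.pi * x))

noncomputable def psiSum (n : ℕ) (x : ℝ) : ℝ :=
  ∑ ℓ ∈ Finset.range n, psi (Int.fract ((2:ℝ) ^ ℓ * x))

/-!
Write `θ_ℓ ∈ [0, π]` for the angle with `cos θ_ℓ = cos (2π 2^ℓ x)`, so that `θ_{ℓ+1} = T θ_ℓ`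
for the tent map `T θ = arccos (cos 2θ)` and `ψ (2^ℓ x) = log (1 - cos θ_ℓ)`. With `λ = √3/9`,
one step is controlled by a coboundary:
`log (1 - cos θ) ≤ log (3/2) + λ (θ - T θ)`.
Near the fixed point `2π/3` of `T` (the orbit of `1/3`) this is the tangent line of the concave
function `log (1 - cos)`, whose slope there is `1/√3 = 3λ` (it follows from `log t ≤ t - 1` and
the concavity of `cos`); for `θ ≤ π/2` the left side is `≤ 0`.
Summing, `ψ_n(x) ≤ n log (3/2) + λ (θ_0 - θ_n) ≤ ψ_n(1/3) + λπ`.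
-/

open Real Finset

lemma ConcaveOn.le_add_mul_sub_of_hasDerivAt {S : Set ℝ} {f : ℝ → ℝ} {x y f' : ℝ}
    (hf : ConcaveOn ℝ S f) (hx : x ∈ S) (hy : y ∈ S) (hf' : HasDerivAt f f' x) :
    f y ≤ f x + f' * (y - x) := by
  rcases lt_trichotomy y x with hyx | rfl | hxy
  · have h := hf.le_slope_of_hasDerivAt hy hx hyx hf'
    rw [slope_def_field, le_div_iff₀ (sub_pos.mpr hyx)] at h
    linarith
  · simp
  · have h := hf.slope_le_of_hasDerivAt hx hy hxy hf'
    rw [slope_def_field, div_le_iff₀ (sub_pos.mpr hxy)] at h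
    linarith

lemma cos_le_tangent_pi_div_three {u : ℝ} (hu₀ : 0 ≤ u) (hu₁ : u ≤ π / 2) :
    cos u ≤ 1 / 2 - √3 / 2 * (u - π / 3) := by
  have h := strictConcaveOn_cos_Icc.concaveOn.le_add_mul_sub_of_hasDerivAt
    (x := π / 3) (y := u) ⟨by linarith [pi_pos], by linarith [pi_pos]⟩ ⟨by linarith, hu₁⟩
    (hasDerivAt_cos _)
  rw [cos_pi_div_three, sin_pi_div_three] at h
  linarith

lemma sqrt_three_le : √3 ≤ 1.8 := by
  nlinarith [sq_sqrt (show (0 : ℝ) ≤ 3 by norm_num), sqrt_nonneg 3]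

lemma one_third_le_log_three_halves : 1 / 3 ≤ log (3 / 2) := by
  have h := one_sub_inv_le_log_of_pos (show (0 : ℝ) < 3 / 2 by norm_num)
  norm_num at h ⊢
  linarith

/-- This includes the singular point `θ = 0`, where Mathlib's `log 0 = 0` is the junk value. -/
lemma log_one_sub_cos_le_of_le_pi_div_two {θ : ℝ} (h₀ : 0 ≤ θ) (h₁ : θ ≤ π / 2) :
    log (1 - cos θ) ≤ log (3 / 2) - √3 / 9 * θ := by
  have hcos : 0 ≤ cos θ := cos_nonneg_of_mem_Icc ⟨by linarith [pi_pos], h₁⟩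
  have hlog : log (1 - cos θ) ≤ 0 := log_nonpos (by linarith [cos_le_one θ]) (by linarith)
  have hweight : √3 / 9 * θ ≤ 1 / 3 := by
    nlinarith [sqrt_three_le, sqrt_nonneg 3, pi_lt_d2]
  linarith [one_third_le_log_three_halves]

lemma log_one_sub_cos_le_tangent {θ : ℝ} (h₀ : π / 2 ≤ θ) (h₁ : θ ≤ π) :
    log (1 - cos θ) ≤ log (3 / 2) + √3 / 3 * (θ - 2 * π / 3) := by
  have hcos : -cos θ ≤ 1 / 2 + √3 / 2 * (θ - 2 * π / 3) := by
    have h := cos_le_tangent_pi_div_three (u := π - θ) (by linarith) (by linarith)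
    rw [cos_pi_sub] at h
    linarith
  have hpos : 0 < 1 - cos θ := by
    linarith [cos_nonpos_of_pi_div_two_le_of_le h₀ (by linarith : θ ≤ π + π / 2)]
  have hlog := log_le_sub_one_of_pos (div_pos hpos (by norm_num : (0 : ℝ) < 3 / 2))
  rw [log_div hpos.ne' (by norm_num)] at hlog
  linarith

lemma arccos_cos_two_mul_of_pi_div_two_le {θ : ℝ} (h₀ : π / 2 ≤ θ) (h₁ : θ ≤ π) :
    arccos (cos (2 * θ)) = 2 * π - 2 * θ := by
  rw [← cos_two_pi_sub]
  exact arccos_cos (by linarith) (by linarith)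

lemma log_one_sub_cos_le_coboundary {θ : ℝ} (h₀ : 0 ≤ θ) (h₁ : θ ≤ π) :
    log (1 - cos θ) ≤ log (3 / 2) + √3 / 9 * (θ - arccos (cos (2 * θ))) := by
  rcases le_total θ (π / 2) with hθ | hθ
  · rw [arccos_cos (by linarith) (by linarith)]
    linarith [log_one_sub_cos_le_of_le_pi_div_two h₀ hθ]
  · rw [arccos_cos_two_mul_of_pi_div_two_le hθ h₁]
    linarith [log_one_sub_cos_le_tangent hθ h₁]

/-- The angle `θ ∈ [0, π]` with `cos θ = cos (2π y)`, i.e. `2π` times the distance from `y`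
to `ℤ`. -/
noncomputable def circleAngle (y : ℝ) : ℝ := arccos (cos (2 * π * y))

lemma circleAngle_nonneg (y : ℝ) : 0 ≤ circleAngle y := arccos_nonneg _

lemma circleAngle_le_pi (y : ℝ) : circleAngle y ≤ π := arccos_le_pi _

lemma cos_circleAngle (y : ℝ) : cos (circleAngle y) = cos (2 * π * y) :=
  cos_arccos (neg_one_le_cos _) (cos_le_one _)

lemma circleAngle_two_mul (y : ℝ) :
    circleAngle (2 * y) = arccos (cos (2 * circleAngle y)) := by
  rw [circleAngle, cos_two_mul, cos_circleAngle, ← cos_two_mul]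
  ring_nf

lemma cos_two_pi_mul_fract (y : ℝ) : cos (2 * π * Int.fract y) = cos (2 * π * y) := by
  rw [Int.fract, show 2 * π * (y - ⌊y⌋) = 2 * π * y - ⌊y⌋ * (2 * π) by ring,
    cos_sub_int_mul_two_pi]

lemma psi_fract (y : ℝ) : psi (Int.fract y) = log (1 - cos (circleAngle y)) := by
  rw [psi, cos_two_pi_mul_fract, cos_circleAngle]

lemma cos_two_pi_mul_two_pow_div_three (ℓ : ℕ) : cos (2 * π * (2 ^ ℓ * (1 / 3))) = -(1 / 2) := by
  induction ℓ with
  | zero =>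
    rw [show 2 * π * ((2 : ℝ) ^ 0 * (1 / 3)) = π - π / 3 by ring, cos_pi_sub, cos_pi_div_three]
  | succ m ih =>
    rw [show 2 * π * ((2 : ℝ) ^ (m + 1) * (1 / 3)) = 2 * (2 * π * (2 ^ m * (1 / 3))) by ring,
      cos_two_mul, ih]
    norm_num

lemma psiSum_one_third (n : ℕ) : psiSum n (1 / 3) = n * log (3 / 2) := by
  have h : ∀ ℓ ∈ range n, psi (Int.fract ((2 : ℝ) ^ ℓ * (1 / 3))) = log (3 / 2) := by
    intro ℓ _
    rw [psi, cos_two_pi_mul_fract, cos_two_pi_mul_two_pow_div_three]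
    norm_num
  rw [psiSum, sum_congr rfl h, sum_const, card_range, nsmul_eq_mul]

lemma psiSum_le (n : ℕ) (x : ℝ) :
    psiSum n x ≤ n * log (3 / 2) + √3 / 9 * (circleAngle x - circleAngle (2 ^ n * x)) := by
  set θ : ℕ → ℝ := fun ℓ ↦ circleAngle (2 ^ ℓ * x)
  have hstep : ∀ ℓ ∈ range n,
      psi (Int.fract ((2 : ℝ) ^ ℓ * x)) ≤ log (3 / 2) + (√3 / 9 * θ ℓ - √3 / 9 * θ (ℓ + 1)) := by
    intro ℓ _
    have hθ : θ (ℓ + 1) = arccos (cos (2 * θ ℓ)) := by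
      simp only [θ, pow_succ, mul_comm _ (2 : ℝ), mul_assoc, circleAngle_two_mul]
    rw [psi_fract, hθ, ← mul_sub]
    exact log_one_sub_cos_le_coboundary (circleAngle_nonneg _) (circleAngle_le_pi _)
  calc psiSum n x ≤ ∑ ℓ ∈ range n, (log (3 / 2) + (√3 / 9 * θ ℓ - √3 / 9 * θ (ℓ + 1))) :=
        sum_le_sum hstep
    _ = n * log (3 / 2) + √3 / 9 * (circleAngle x - circleAngle (2 ^ n * x)) := by
        rw [sum_add_distrib, sum_const, card_range, nsmul_eq_mul,
          sum_range_sub' (fun ℓ ↦ √3 / 9 * θ ℓ), ← mul_sub]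
        simp [θ]

theorem psiSum_max_bound :
    ∀ n : ℕ, ∀ x ∈ Set.Icc (0:ℝ) 1,
      (∀ ℓ < n, Int.fract ((2:ℝ) ^ ℓ * x) ≠ 0) →
      psiSum n x - psiSum n (1/3) ≤ Real.pi + Real.log (4/3) := by
  intro n x _ _
  have hdiff : circleAngle x - circleAngle (2 ^ n * x) ≤ π := by
    linarith [circleAngle_le_pi x, circleAngle_nonneg (2 ^ n * x)]
  calc psiSum n x - psiSum n (1 / 3)
      ≤ √3 / 9 * (circleAngle x - circleAngle (2 ^ n * x)) := by
        linarith [psiSum_le n x, psiSum_one_third n]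
    _ ≤ √3 / 9 * π := mul_le_mul_of_nonneg_left hdiff (by positivity)
    _ ≤ π + log (4 / 3) := by
        nlinarith [pi_pos, sqrt_three_le, log_nonneg (by norm_num : (1 : ℝ) ≤ 4 / 3)]
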